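/- Let G be a locally compact Hausdorff topological group, Γ a discrete subgroup of G such that the quotient space G/Γ is compact, and N a closed normal subgroup of G such that the quotient space N/(N ∩ Γ) is compact. Then the image of Γ under the quotient homomorphism ν : G → G/N is a discrete subgroup of G/N, and the quotient space (G/N)/ν(Γ) is compact; that is, ν(Γ) is a uniform lattice in G/N. -/

import Mathlib

/-!
Since `N/(N ∩ Γ)` is compact, `N ⊆ K Γ` for some compact `K ⊆ N`. If `γ ∈ Γ` is `w n` with
`w` in a compact neighbourhood `C` of `1` and `n = k δ`, then `γ δ⁻¹ = w k` lies in the finite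
set `Γ ∩ C K`. Removing from `C` the compact set `(Γ ∩ C K \ N) K⁻¹`, which avoids `1`, forces
`γ ∈ N`, so the image of this neighbourhood in `G/N` meets `ν(Γ)` only in `1`. Cocompactness
passes to `ν(Γ)` because `G/Γ → (G/N)/ν(Γ)` is a continuous surjection.
-/

open Set Pointwise Topology

theorem IsOpenMap.exists_isCompact_image_eq_univ {X Y : Type*} [TopologicalSpace X]
    [TopologicalSpace Y] [WeaklyLocallyCompactSpace X] [CompactSpace Y] {f : X → Y}
    (hf : IsOpenMap f) (hsurj : Function.Surjective f) :
    ∃ K : Set X, IsCompact K ∧ f '' K = univ := by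
  choose C hC hCx using fun x : X => exists_compact_mem_nhds x
  obtain ⟨t, ht⟩ := isCompact_univ.elim_finite_subcover (fun x => f '' interior (C x))
    (fun x => hf _ isOpen_interior) fun y _ => by
      obtain ⟨x, rfl⟩ := hsurj y
      exact mem_iUnion.2 ⟨x, mem_image_of_mem f (mem_interior_iff_mem_nhds.2 (hCx x))⟩
  refine ⟨⋃ x ∈ t, C x, t.isCompact_biUnion fun x _ => hC x, eq_univ_of_univ_subset ?_⟩
  rw [image_iUnion₂]
  exact ht.trans (iUnion₂_mono fun x _ => image_mono interior_subset)

theorem QuotientGroup.exists_isCompact_mul_eq_univ {G : Type*} [Group G] [TopologicalSpace G]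
    [IsTopologicalGroup G] [WeaklyLocallyCompactSpace G] (Δ : Subgroup G)
    [CompactSpace (G ⧸ Δ)] : ∃ K : Set G, IsCompact K ∧ K * (Δ : Set G) = univ := by
  obtain ⟨K, hK, hKΔ⟩ := isOpenMap_coe.exists_isCompact_image_eq_univ (mk_surjective (s := Δ))
  exact ⟨K, hK, by rw [← preimage_image_mk_eq_mul, hKΔ, preimage_univ]⟩

theorem Subgroup.exists_isCompact_subset_subset_mul {G : Type*} [Group G] [TopologicalSpace G]
    [IsTopologicalGroup G] (Γ N : Subgroup G) [WeaklyLocallyCompactSpace N]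
    [CompactSpace (N ⧸ Γ.subgroupOf N)] :
    ∃ K : Set G, IsCompact K ∧ K ⊆ N ∧ (N : Set G) ⊆ K * Γ := by
  obtain ⟨K, hK, hKΓ⟩ := QuotientGroup.exists_isCompact_mul_eq_univ (Γ.subgroupOf N)
  refine ⟨(↑) '' K, hK.image continuous_subtype_val, fun _ ⟨k, _, hk⟩ => hk ▸ k.2,
    fun n hn => ?_⟩
  obtain ⟨k, hk, δ, hδ, hkδ⟩ := hKΓ.symm ▸ mem_univ (⟨n, hn⟩ : N)
  exact ⟨k, mem_image_of_mem _ hk, δ, hδ, congrArg Subtype.val hkδ⟩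

theorem Subgroup.exists_mem_nhds_one_inter_mul_subset {G : Type*} [Group G]
    [TopologicalSpace G] [IsTopologicalGroup G] [T2Space G] [WeaklyLocallyCompactSpace G]
    (Γ N : Subgroup G) [DiscreteTopology Γ] {K : Set G} (hK : IsCompact K)
    (hKN : K ⊆ N) (hNK : (N : Set G) ⊆ K * Γ) :
    ∃ W ∈ 𝓝 (1 : G), (Γ : Set G) ∩ (W * N) ⊆ N := by
  obtain ⟨C, hC, hC1⟩ := exists_compact_mem_nhds (1 : G)
  have hF : ((C * K) ∩ Γ).Finite :=
    ((hC.mul hK).inter_right Subgroup.isClosed_of_discrete).finite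
      ((isDiscrete_iff_discreteTopology.2 ‹_›).mono inter_subset_right)
  set S := (((C * K) ∩ Γ) \ N) * K⁻¹
  have hS : IsCompact S := hF.sdiff.isCompact.mul hK.inv
  have hS1 : (1 : G) ∉ S := by
    rintro ⟨f, ⟨-, hfN⟩, k, hk, hfk⟩
    exact hfN (mul_eq_one_iff_eq_inv.1 hfk ▸ hKN hk)
  refine ⟨C \ S, Filter.sdiff_mem hC1 (hS.isClosed.compl_mem_nhds hS1), ?_⟩
  rintro γ ⟨hγ, w, ⟨hwC, hwS⟩, n, hn, rfl⟩
  obtain ⟨k, hk, δ, hδ, rfl⟩ := hNK hn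
  have hδN : δ ∈ N := by simpa using N.mul_mem (N.inv_mem (hKN hk)) hn
  have hwkΓ : w * k ∈ Γ := by simpa [mul_assoc] using Γ.mul_mem hγ (Γ.inv_mem hδ)
  by_contra hγN
  have hwkN : w * k ∉ N := fun h => hγN (by simpa [mul_assoc] using N.mul_mem h hδN)
  exact hwS ⟨w * k, ⟨⟨mul_mem_mul hwC hk, hwkΓ⟩, hwkN⟩, k⁻¹, inv_mem_inv.2 hk, by group⟩

theorem Subgroup.discreteTopology_of_mem_nhds_inter_subset {G : Type*} [Group G]
    [TopologicalSpace G] [IsTopologicalGroup G] (S : Subgroup G) {U : Set G}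
    (hU : U ∈ 𝓝 1) (hUS : U ∩ S ⊆ {1}) : DiscreteTopology S := by
  rw [discreteTopology_iff_isOpen_singleton_one, isOpen_singleton_iff_nhds_eq_pure]
  refine le_antisymm (Filter.le_pure_iff.2 ?_) (pure_le_nhds 1)
  exact (mem_nhds_subtype _ _ _).2 ⟨U, hU, fun x hx => Subtype.ext (hUS ⟨hx, x.2⟩)⟩

theorem QuotientGroup.discreteTopology_map_mk' {G : Type*} [Group G] [TopologicalSpace G]
    [IsTopologicalGroup G] {Γ N : Subgroup G} [N.Normal] {W : Set G} (hW : W ∈ 𝓝 1)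
    (hWΓ : (Γ : Set G) ∩ (W * N) ⊆ N) : DiscreteTopology (Γ.map (mk' N)) := by
  refine (Γ.map (mk' N)).discreteTopology_of_mem_nhds_inter_subset
    (isOpenMap_coe.image_mem_nhds hW) ?_
  rintro _ ⟨⟨w, hw, rfl⟩, γ, hγ, hγw⟩
  have hγN : γ ∈ N := hWΓ ⟨hγ, w, hw, w⁻¹ * γ, QuotientGroup.eq.1 hγw.symm, by group⟩
  rw [← hγw]
  exact (eq_one_iff γ).2 hγN

theorem QuotientGroup.compactSpace_map {G H : Type*} [Group G] [TopologicalSpace G] [Group H]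
    [TopologicalSpace H] (f : G →* H) (hf : Continuous f) (hsurj : Function.Surjective f)
    (Γ : Subgroup G) [CompactSpace (G ⧸ Γ)] : CompactSpace (H ⧸ Γ.map f) := by
  have hf' : ∀ a b : G, leftRel Γ a b → (mk (f a) : H ⧸ Γ.map f) = mk (f b) := fun a b hab =>
    QuotientGroup.eq.2 ⟨a⁻¹ * b, leftRel_apply.1 hab, by simp⟩
  refine Function.Surjective.compactSpace ((continuous_mk.comp hf).quotient_lift hf')
    fun x => ?_
  obtain ⟨g, rfl⟩ := (mk_surjective.comp hsurj) x
  exact ⟨mk g, rfl⟩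

/-- Let `G` be a locally compact Hausdorff topological group, `Γ` a
discrete subgroup with `G/Γ` compact, and `N` a closed normal subgroup such that
`N/(N ∩ Γ)` is compact. Then the image `ν(Γ)` of `Γ` under the quotient map
`ν : G → G/N` is a discrete subgroup of `G/N` and `(G/N)/ν(Γ)` is compact; that is,
`ν(Γ)` is a uniform lattice in `G/N`. -/
theorem image_lattice_of_cocompact_normal {G : Type*} [Group G] [TopologicalSpace G]
    [IsTopologicalGroup G] [T2Space G] [LocallyCompactSpace G]
    (Γ : Subgroup G) [DiscreteTopology Γ] (hGΓ : CompactSpace (G ⧸ Γ))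
    (N : Subgroup G) [N.Normal] (hN : IsClosed (N : Set G))
    (hNΓ : CompactSpace (N ⧸ Γ.subgroupOf N)) :
    DiscreteTopology (Γ.map (QuotientGroup.mk' N)) ∧
      CompactSpace ((G ⧸ N) ⧸ Γ.map (QuotientGroup.mk' N)) := by
  have : LocallyCompactSpace N := hN.locallyCompactSpace
  obtain ⟨K, hK, hKN, hNK⟩ := Γ.exists_isCompact_subset_subset_mul N
  obtain ⟨W, hW, hWΓ⟩ := Γ.exists_mem_nhds_one_inter_mul_subset N hK hKN hNK
  exact ⟨QuotientGroup.discreteTopology_map_mk' hW hWΓ, QuotientGroup.compactSpace_map _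
    QuotientGroup.continuous_mk (QuotientGroup.mk'_surjective N) Γ⟩
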